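/- arXiv:2604.13850 — 2 statements merged into one kernel-verified Lean document; each statement's English description precedes it below -/
import Mathlib

section
/- For every positive integer n, R(W_5, K_n) ≥ 2·R(K_3, K_n) − 1 and R(W_6, K_n) ≥ 2·R(K_3, K_n) − 1. -/
open SimpleGraph

/-- `H` is contained in `G` as a subgraph. -/
def Contains {α β : Type*} (G : SimpleGraph α) (H : SimpleGraph β) : Prop :=
  ∃ f : H →g G, Function.Injective f

/-- Every red/blue coloring of `K_N` (red = `C`, blue = `Cᶜ`) has a red `G` or blue `H`. -/
def RamseyProp {α β : Type*} (N : ℕ) (G : SimpleGraph α) (H : SimpleGraph β) : Prop :=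
  ∀ C : SimpleGraph (Fin N), Contains C G ∨ Contains Cᶜ H

/-- The Ramsey number `R(G, H)`. -/
noncomputable def ramseyNumber {α β : Type*} (G : SimpleGraph α) (H : SimpleGraph β) : ℕ :=
  sInf {N | RamseyProp N G H}

/-- The join `G + H`: disjoint union plus all edges in between. -/
def graphJoin {α β : Type*} (G : SimpleGraph α) (H : SimpleGraph β) : SimpleGraph (α ⊕ β) :=
  SimpleGraph.fromRel (fun x y =>
    match x, y with
    | Sum.inl a, Sum.inl b => G.Adj a b
    | Sum.inr a, Sum.inr b => H.Adj a b
    | _, _ => True)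

/-- The wheel `W_n = K_1 + C_{n-1}` on `n` vertices. -/
def wheel (n : ℕ) : SimpleGraph (Fin 1 ⊕ Fin (n - 1)) :=
  graphJoin ⊥ (SimpleGraph.cycleGraph (n - 1))

/-- A perfect matching `k • K_2` on `2k` vertices. -/
def matching (k : ℕ) : SimpleGraph (Fin k × Fin 2) :=
  SimpleGraph.fromRel (fun x y => x.1 = y.1)

/-- The fan `F_k = K_1 + k • K_2`. -/
def fan (k : ℕ) : SimpleGraph (Fin 1 ⊕ Fin k × Fin 2) :=
  graphJoin ⊥ (matching k)

/-- The kipas `K̂_n = K_1 + P_{n-1}` on `n` vertices. -/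
def kipas (n : ℕ) : SimpleGraph (Fin 1 ⊕ Fin (n - 1)) :=
  graphJoin ⊥ (SimpleGraph.pathGraph (n - 1))

/-- The blow-up `G[K_2]`: each vertex replaced by an adjacent pair; vertices in
different pairs adjacent iff the original vertices are adjacent. -/
def blowUp {α : Type*} (G : SimpleGraph α) : SimpleGraph (α × Fin 2) :=
  SimpleGraph.fromRel (fun x y => x.1 = y.1 ∨ G.Adj x.1 y.1)



section RamseyAux

lemma contains_top_iff {V : Type*} (C : SimpleGraph V) (s : ℕ) :
    Contains C (⊤ : SimpleGraph (Fin s)) ↔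
      ∃ f : Fin s → V, Function.Injective f ∧ ∀ i j, i ≠ j → C.Adj (f i) (f j) := by
  constructor
  · rintro ⟨f, hf⟩
    exact ⟨f, hf, fun i j h => f.map_rel ((top_adj i j).2 h)⟩
  · rintro ⟨f, hinj, hadj⟩
    exact ⟨⟨f, fun {a b} h => hadj a b ((top_adj a b).1 h)⟩, hinj⟩

lemma contains_comap {α β γ : Type*} (C : SimpleGraph β) (e : α → β)
    (he : Function.Injective e) (H : SimpleGraph γ) :
    Contains (C.comap e) H → Contains C H := by
  rintro ⟨f, hf⟩
  exact ⟨SimpleGraph.Hom.comp ⟨e, fun {a b} h => h⟩ f, fun x y h => hf (he h)⟩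

lemma contains_comap_compl {α β γ : Type*} (C : SimpleGraph β) (e : α → β)
    (he : Function.Injective e) (H : SimpleGraph γ) :
    Contains (C.comap e)ᶜ H → Contains Cᶜ H := by
  rintro ⟨f, hf⟩
  refine ⟨SimpleGraph.Hom.comp ⟨e, fun {a b} h => ?_⟩ f, fun x y h => hf (he h)⟩
  rw [compl_adj] at h ⊢
  exact ⟨fun hx => h.1 (he hx), by simpa using h.2⟩

lemma contains_of_contains_top {V γ : Type*} [Fintype γ] (C : SimpleGraph V)
    (H : SimpleGraph γ) (s : ℕ) (hcard : Fintype.card γ ≤ s) :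
    Contains C (⊤ : SimpleGraph (Fin s)) → Contains C H := by
  intro h
  rw [contains_top_iff] at h
  obtain ⟨f, hfinj, hfadj⟩ := h
  obtain ⟨e⟩ := Function.Embedding.nonempty_of_card_le (by simpa using hcard :
    Fintype.card γ ≤ Fintype.card (Fin s))
  refine ⟨⟨fun x => f (e x), fun {a b} h => hfadj _ _ (fun hh => H.ne_of_adj h (e.injective hh))⟩,
    fun x y h => e.injective (hfinj h)⟩

lemma clique_extend {V : Type*} (D : SimpleGraph V) {s : ℕ} (v : V) (g : Fin s → V)
    (hg : Function.Injective g) (hv : ∀ i, D.Adj v (g i))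
    (hp : ∀ i j, i ≠ j → D.Adj (g i) (g j)) :
    ∃ F : Fin (s+1) → V, Function.Injective F ∧ ∀ i j, i ≠ j → D.Adj (F i) (F j) := by
  refine ⟨Fin.snoc g v, ?_, ?_⟩
  · intro i j h
    induction i using Fin.lastCases with
    | last =>
      induction j using Fin.lastCases with
      | last => rfl
      | cast j =>
        simp only [Fin.snoc_last, Fin.snoc_castSucc] at h
        exact absurd h.symm (hv j).ne'
    | cast i =>
      induction j using Fin.lastCases with
      | last =>
        simp only [Fin.snoc_last, Fin.snoc_castSucc] at h
        exact absurd h (hv i).ne'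
      | cast j =>
        simp only [Fin.snoc_castSucc] at h
        exact congrArg Fin.castSucc (hg h)
  · intro i j hij
    induction i using Fin.lastCases with
    | last =>
      induction j using Fin.lastCases with
      | last => exact absurd rfl hij
      | cast j => simpa using hv j
    | cast i =>
      induction j using Fin.lastCases with
      | last => simpa using (hv i).symm
      | cast j =>
        simp only [Fin.snoc_castSucc]
        exact hp i j (fun h => hij (congrArg Fin.castSucc h))

lemma contains_top_zero {V : Type*} (C : SimpleGraph V) :
    Contains C (⊤ : SimpleGraph (Fin 0)) :=
  (contains_top_iff C 0).2 ⟨Fin.elim0, fun x => x.elim0, fun x => x.elim0⟩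

lemma ramsey_exists (s t : ℕ) :
    ∃ N, RamseyProp N (⊤ : SimpleGraph (Fin s)) (⊤ : SimpleGraph (Fin t)) := by
  classical
  induction s generalizing t with
  | zero => exact ⟨0, fun C => Or.inl (contains_top_zero C)⟩
  | succ a ih =>
    induction t with
    | zero => exact ⟨0, fun C => Or.inr (contains_top_zero Cᶜ)⟩
    | succ b ih2 =>
      obtain ⟨N1, h1⟩ := ih (b+1)
      obtain ⟨N2, h2⟩ := ih2
      refine ⟨N1 + N2 + 1, fun C => ?_⟩
      set v : Fin (N1 + N2 + 1) := Fin.last (N1 + N2) with hv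
      set Sred := Finset.univ.filter (fun u => C.Adj v u) with hSred
      set Sblue := Finset.univ.filter (fun u => u ≠ v ∧ ¬ C.Adj v u) with hSblue
      have hcard : N1 + N2 ≤ Sred.card + Sblue.card := by
        have hsub : Finset.univ.erase v ⊆ Sred ∪ Sblue := by
          intro u hu
          simp only [Finset.mem_erase, Finset.mem_univ, and_true] at hu
          by_cases h : C.Adj v u
          · exact Finset.mem_union_left _ (by simp [hSred, h])
          · exact Finset.mem_union_right _ (by simp [hSblue, hu, h])
        calc N1 + N2 = (Finset.univ.erase v).card := by
              simp [Finset.card_erase_of_mem, Finset.card_univ]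
          _ ≤ (Sred ∪ Sblue).card := Finset.card_le_card hsub
          _ ≤ Sred.card + Sblue.card := Finset.card_union_le _ _
      have getg : ∀ (S : Finset (Fin (N1+N2+1))) (N' : ℕ), N' ≤ S.card →
          ∃ g : Fin N' → Fin (N1+N2+1), Function.Injective g ∧ ∀ i, g i ∈ S := by
        intro S N' hN'
        have : Fintype.card (Fin N') ≤ Fintype.card S := by
          simpa [Fintype.card_coe] using hN'
        obtain ⟨e⟩ := Function.Embedding.nonempty_of_card_le this
        exact ⟨fun i => (e i : Fin (N1+N2+1)),
          fun x y h => e.injective (Subtype.val_injective h), fun i => (e i).2⟩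
      by_cases hred : N1 ≤ Sred.card
      · obtain ⟨g, hginj, hgmem⟩ := getg Sred N1 hred
        rcases h1 (C.comap g) with h | h
        · left
          rw [contains_top_iff] at h ⊢
          obtain ⟨f, hfinj, hfadj⟩ := h
          refine clique_extend C v (g ∘ f) (hginj.comp hfinj) ?_ ?_
          · intro i
            have := hgmem (f i)
            simpa [hSred] using this
          · intro i j hij
            exact hfadj i j hij
        · right
          exact contains_comap_compl C g hginj _ h
      · have hblue : N2 ≤ Sblue.card := by omega
        obtain ⟨g, hginj, hgmem⟩ := getg Sblue N2 hblue
        rcases h2 (C.comap g) with h | h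
        · left
          exact contains_comap C g hginj _ h
        · right
          rw [contains_top_iff] at h ⊢
          obtain ⟨f, hfinj, hfadj⟩ := h
          refine clique_extend Cᶜ v (g ∘ f) (hginj.comp hfinj) ?_ ?_
          · intro i
            have := hgmem (f i)
            simp only [hSblue, Finset.mem_filter, Finset.mem_univ, true_and] at this
            rw [compl_adj]
            exact ⟨this.1.symm, fun h => this.2 h⟩
          · intro i j hij
            have := hfadj i j hij
            rw [compl_adj] at this ⊢
            exact ⟨fun h => this.1 (hginj h), by simpa using this.2⟩

lemma blowUp_adj {α : Type*} (C : SimpleGraph α) (x y : α × Fin 2) :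
    (blowUp C).Adj x y ↔ x ≠ y ∧ (x.1 = y.1 ∨ C.Adj x.1 y.1) := by
  rw [blowUp, SimpleGraph.fromRel_adj]
  constructor
  · rintro ⟨h, (h2 | h2) | (h2 | h2)⟩
    · exact ⟨h, Or.inl h2⟩
    · exact ⟨h, Or.inr h2⟩
    · exact ⟨h, Or.inl h2.symm⟩
    · exact ⟨h, Or.inr h2.symm⟩
  · rintro ⟨h, h2⟩
    exact ⟨h, Or.inl h2⟩

lemma triangle_contains {α : Type*} (C : SimpleGraph α) {a b c : α}
    (h1 : C.Adj a b) (h2 : C.Adj a c) (h3 : C.Adj b c) :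
    Contains C (⊤ : SimpleGraph (Fin 3)) := by
  rw [contains_top_iff]
  have n1 := h1.ne
  have n2 := h2.ne
  have n3 := h3.ne
  have s1 := h1.symm
  have s2 := h2.symm
  have s3 := h3.symm
  refine ⟨![a, b, c], ?_, ?_⟩
  · intro i j h
    fin_cases i <;> fin_cases j <;> simp_all
  · intro i j h
    fin_cases i <;> fin_cases j <;> simp_all

lemma fin2_three {x y z : Fin 2} (h1 : x ≠ y) (h2 : x ≠ z) (h3 : y ≠ z) : False := by
  omega

lemma no_wheel_aux {α : Type*} (C : SimpleGraph α)
    (hC : ¬ Contains C (⊤ : SimpleGraph (Fin 3)))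
    {m : ℕ}
    (hcyc : ∀ i : Fin (m+1), (SimpleGraph.cycleGraph (m+1)).Adj i (i+1))
    (hne : ∀ i : Fin (m+1), i+1 ≠ i ∧ i+1+1 ≠ i ∧ i+1+1+1 ≠ i) :
    ¬ Contains (blowUp C)
      (graphJoin (⊥ : SimpleGraph (Fin 1)) (SimpleGraph.cycleGraph (m+1))) := by
  rintro ⟨f, hf⟩
  set hub := f (Sum.inl 0) with hhub
  set rim : Fin (m+1) → α × Fin 2 := fun i => f (Sum.inr i) with hrim
  set w := hub.1 with hw
  set V : Fin (m+1) → α := fun i => (rim i).1 with hV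
  have hub_adj : ∀ i, (blowUp C).Adj hub (rim i) := by
    intro i
    refine f.map_rel ?_
    rw [graphJoin, SimpleGraph.fromRel_adj]
    exact ⟨by simp, Or.inl trivial⟩
  have rim_adj : ∀ i, (blowUp C).Adj (rim i) (rim (i+1)) := by
    intro i
    refine f.map_rel ?_
    rw [graphJoin, SimpleGraph.fromRel_adj]
    exact ⟨by simpa using (hcyc i).ne, Or.inl (hcyc i)⟩
  have hub_w : ∀ i, V i = w ∨ C.Adj w (V i) := by
    intro i
    rcases (blowUp_adj C _ _).1 (hub_adj i) with ⟨-, h | h⟩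
    · exact Or.inl h.symm
    · exact Or.inr h
  have step : ∀ i, V i ≠ w → V (i+1) ≠ w → V i = V (i+1) := by
    intro i hi hi1
    rcases (blowUp_adj C _ _).1 (rim_adj i) with ⟨-, h | h⟩
    · exact h
    · rcases hub_w i with h1 | h1; · exact absurd h1 hi
      rcases hub_w (i+1) with h2 | h2; · exact absurd h2 hi1
      exact absurd (triangle_contains C h1 h2 h) hC
  have rim_ne_hub : ∀ i, rim i ≠ hub := by
    intro i h
    exact Sum.inr_ne_inl (hf h)
  have rim_inj : ∀ i j, i ≠ j → rim i ≠ rim j := by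
    intro i j hij h
    exact hij (Sum.inr_injective (hf h))
  have at_most_one : ∀ i j, V i = w → V j = w → i = j := by
    intro i j hi hj
    by_contra hij
    refine fin2_three (x := (rim i).2) (y := (rim j).2) (z := hub.2) ?_ ?_ ?_
    · exact fun h => rim_inj i j hij (Prod.ext (hi.trans hj.symm) h)
    · exact fun h => rim_ne_hub i (Prod.ext hi h)
    · exact fun h => rim_ne_hub j (Prod.ext hj h)
  have three_repeat : ∀ i j l, i ≠ j → i ≠ l → j ≠ l → V i = V j → V i = V l → False := by
    intro i j l hij hil hjl h1 h2
    refine fin2_three (x := (rim i).2) (y := (rim j).2) (z := (rim l).2) ?_ ?_ ?_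
    · exact fun h => rim_inj i j hij (Prod.ext h1 h)
    · exact fun h => rim_inj i l hil (Prod.ext h2 h)
    · exact fun h => rim_inj j l hjl (Prod.ext (h1.symm.trans h2) h)
  obtain ⟨i0, g1, g2, g3⟩ : ∃ i0 : Fin (m+1), V i0 ≠ w ∧ V (i0+1) ≠ w ∧ V (i0+1+1) ≠ w := by
    by_cases hb : ∃ b, V b = w
    · obtain ⟨b, hbw⟩ := hb
      refine ⟨b+1, ?_, ?_, ?_⟩
      · exact fun h => (hne b).1 (at_most_one _ _ h hbw)
      · exact fun h => (hne b).2.1 (at_most_one _ _ h hbw)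
      · exact fun h => (hne b).2.2 (at_most_one _ _ h hbw)
    · push_neg at hb
      exact ⟨0, hb _, hb _, hb _⟩
  have e1 := step i0 g1 g2
  have e2 := step (i0+1) g2 g3
  exact three_repeat i0 (i0+1) (i0+1+1) (hne i0).1.symm (hne i0).2.1.symm
    (hne (i0+1)).1.symm e1 (e1.trans e2)

lemma no_blue {α : Type*} (C : SimpleGraph α) (n : ℕ)
    (hC : ¬ Contains Cᶜ (⊤ : SimpleGraph (Fin n))) :
    ¬ Contains (blowUp C)ᶜ (⊤ : SimpleGraph (Fin n)) := by
  intro h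
  apply hC
  rw [contains_top_iff] at h ⊢
  obtain ⟨f, hfinj, hfadj⟩ := h
  have key : ∀ i j, i ≠ j → (f i).1 ≠ (f j).1 ∧ ¬ C.Adj (f i).1 (f j).1 := by
    intro i j hij
    have := hfadj i j hij
    rw [compl_adj] at this
    obtain ⟨hne', hnadj⟩ := this
    rw [blowUp_adj] at hnadj
    push_neg at hnadj
    exact (hnadj hne').imp (fun h => h) (fun h => h)
  refine ⟨fun i => (f i).1, ?_, ?_⟩
  · intro i j h
    by_contra hij
    exact (key i j hij).1 h
  · intro i j hij
    rw [compl_adj]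
    exact key i j hij

lemma wheel_bound (n : ℕ) (m : ℕ)
    (hcyc : ∀ i : Fin (m+1), (SimpleGraph.cycleGraph (m+1)).Adj i (i+1))
    (hne : ∀ i : Fin (m+1), i+1 ≠ i ∧ i+1+1 ≠ i ∧ i+1+1+1 ≠ i) :
    2 * ramseyNumber (⊤ : SimpleGraph (Fin 3)) (⊤ : SimpleGraph (Fin n)) - 1 ≤
      ramseyNumber (graphJoin (⊥ : SimpleGraph (Fin 1)) (SimpleGraph.cycleGraph (m+1)))
        (⊤ : SimpleGraph (Fin n)) := by
  classical
  set r := ramseyNumber (⊤ : SimpleGraph (Fin 3)) (⊤ : SimpleGraph (Fin n)) with hr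
  rcases Nat.eq_zero_or_pos r with h0 | hpos
  · rw [h0]
    omega
  · have hne3 : {N | RamseyProp N (⊤ : SimpleGraph (Fin 3)) (⊤ : SimpleGraph (Fin n))}.Nonempty := by
      by_contra h
      rw [Set.not_nonempty_iff_eq_empty] at h
      have : r = 0 := by rw [hr, ramseyNumber, h, Nat.sInf_empty]
      omega
    have hsinf : sInf {N | RamseyProp N (⊤ : SimpleGraph (Fin 3)) (⊤ : SimpleGraph (Fin n))} = r := by
      rw [hr, ramseyNumber]
    have hnot : ¬ RamseyProp (r-1) (⊤ : SimpleGraph (Fin 3)) (⊤ : SimpleGraph (Fin n)) :=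
      Nat.notMem_of_lt_sInf (m := r-1)
        (s := {N | RamseyProp N (⊤ : SimpleGraph (Fin 3)) (⊤ : SimpleGraph (Fin n))})
        (by rw [hsinf]; omega)
    rw [RamseyProp] at hnot
    push_neg at hnot
    obtain ⟨C, hC⟩ := hnot
    obtain ⟨hC1, hC2⟩ := hC
    obtain ⟨N0, hN0⟩ := ramsey_exists (m+2) n
    have hWne : {N | RamseyProp N
        (graphJoin (⊥ : SimpleGraph (Fin 1)) (SimpleGraph.cycleGraph (m+1)))
        (⊤ : SimpleGraph (Fin n))}.Nonempty := by
      refine ⟨N0, fun D => (hN0 D).imp (contains_of_contains_top D _ (m+2) ?_) id⟩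
      simp only [Fintype.card_sum, Fintype.card_fin]
      omega
    rw [ramseyNumber]
    refine le_csInf hWne ?_
    intro M hM
    by_contra hlt
    push_neg at hlt
    have : Fintype.card (Fin M) ≤ Fintype.card (Fin (r-1) × Fin 2) := by
      simp only [Fintype.card_fin, Fintype.card_prod]
      omega
    obtain ⟨e⟩ := Function.Embedding.nonempty_of_card_le this
    rcases hM ((blowUp C).comap e) with h | h
    · exact no_wheel_aux C hC1 hcyc hne (contains_comap _ e e.injective _ h)
    · exact no_blue C n hC2 (contains_comap_compl _ e e.injective _ h)

end RamseyAux

theorem stmt_4 (n : ℕ) (hn : 1 ≤ n) :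
    2 * ramseyNumber (⊤ : SimpleGraph (Fin 3)) (⊤ : SimpleGraph (Fin n)) - 1 ≤
      ramseyNumber (wheel 5) (⊤ : SimpleGraph (Fin n)) ∧
    2 * ramseyNumber (⊤ : SimpleGraph (Fin 3)) (⊤ : SimpleGraph (Fin n)) - 1 ≤
      ramseyNumber (wheel 6) (⊤ : SimpleGraph (Fin n)) := by
  constructor
  · exact wheel_bound n 3 (by decide) (by decide)
  · exact wheel_bound n 4 (by decide) (by decide)
end

section
/- For even n ≥ 8, R(W_n, W_n) ≥ 3n − 2; specifically, neither the graph 3K_{n−1} (three disjoint copies of K_{n−1}) nor its complement contains W_n as a subgraph. -/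
open SimpleGraph

/-- The graph 3K_{n-1}: three disjoint copies of the complete graph on n-1 vertices. -/
def threeCliques (n : ℕ) : SimpleGraph (Fin 3 × Fin (n - 1)) :=
  SimpleGraph.fromRel (fun x y => x.1 = y.1)

/-!
The hub of `W_n` is adjacent to all other `n - 1` vertices, so a copy of `W_n` in `3K_{n-1}`
would sit inside one `K_{n-1}`, which is too small. The complement of `3K_{n-1}` is complete
tripartite, hence 3-colourable, whereas for even `n` the rim of `W_n` is an odd cycle needing
three colours besides the hub's. So `3K_{n-1}` is a colouring of `K_{3n-3}` without a
monochromatic `W_n`. Since `ramseyNumber` is an `sInf` (junk value `0` when no `N` works),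
the lower bound also needs the finiteness of `R(W_n, W_n)`, which comes from the Erdős–Szekeres
bound for cliques.
-/

open Finset

lemma contains_iff_isContained {α β : Type*} {G : SimpleGraph α} {H : SimpleGraph β} :
    Contains G H ↔ H ⊑ G :=
  ⟨fun ⟨f, hf⟩ ↦ ⟨f.toCopy hf⟩, fun ⟨f⟩ ↦ ⟨f.toHom, f.injective⟩⟩

section Ramsey

variable {V : Type*} [DecidableEq V]

lemma exists_isNClique_succ_of_neighbors {G : SimpleGraph V} [DecidableRel G.Adj] {S : Finset V}
    {v : V} {s t : ℕ} (hv : v ∈ S)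
    (h : ∃ T ⊆ (S.erase v).filter (G.Adj v), G.IsNClique s T ∨ Gᶜ.IsNClique t T) :
    ∃ T ⊆ S, G.IsNClique (s + 1) T ∨ Gᶜ.IsNClique t T := by
  obtain ⟨T, hTS, hT | hT⟩ := h
  · have hadj : ∀ u ∈ T, G.Adj v u := fun u hu ↦ (mem_filter.mp (hTS hu)).2
    refine ⟨insert v T, insert_subset hv ?_, .inl (hT.insert hadj)⟩
    exact hTS.trans ((filter_subset _ _).trans (erase_subset _ _))
  · exact ⟨T, hTS.trans ((filter_subset _ _).trans (erase_subset _ _)), .inr hT⟩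

lemma card_filter_adj_add_card_filter_compl_adj (G : SimpleGraph V) [DecidableRel G.Adj]
    {S : Finset V} {v : V} (hv : v ∈ S) :
    #((S.erase v).filter (G.Adj v)) + #((S.erase v).filter (Gᶜ.Adj v)) = #S - 1 := by
  have : (S.erase v).filter (Gᶜ.Adj v) = (S.erase v).filter (fun u ↦ ¬ G.Adj v u) :=
    filter_congr fun u hu ↦ by
      simp only [compl_adj, ne_of_mem_erase hu |>.symm, ne_eq, not_false_eq_true, true_and]
  rw [this, card_filter_add_card_filter_not, card_erase_of_mem hv]

theorem exists_isNClique_or_compl_isNClique (s t : ℕ) (G : SimpleGraph V) [DecidableRel G.Adj]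
    (S : Finset V) (hS : (s + t).choose s ≤ #S) :
    ∃ T ⊆ S, G.IsNClique (s + 1) T ∨ Gᶜ.IsNClique (t + 1) T := by
  induction s generalizing t G S with
  | zero =>
    obtain ⟨v, hv⟩ : S.Nonempty := card_pos.mp (by simpa using hS)
    exact ⟨{v}, by simpa using hv, .inl (isNClique_singleton.mpr rfl)⟩
  | succ s ihs =>
    induction t generalizing G S with
    | zero =>
      obtain ⟨v, hv⟩ : S.Nonempty := card_pos.mp (by simpa using hS)
      exact ⟨{v}, by simpa using hv, .inr (isNClique_singleton.mpr rfl)⟩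
    | succ t iht =>
      -- Pascal's rule: either the neighbours or the non-neighbours of `v` are numerous enough.
      have hsplit : (s + 1 + (t + 1)).choose (s + 1)
          = (s + (t + 1)).choose s + (s + 1 + t).choose (s + 1) := by
        rw [show s + 1 + (t + 1) = s + (t + 1) + 1 by ring, Nat.choose_succ_succ]
        congr 2
        ring
      have hpos := (s + (t + 1)).choose_pos (Nat.le_add_right s (t + 1))
      obtain ⟨v, hv⟩ : S.Nonempty := card_pos.mp (by omega)
      have hcard := card_filter_adj_add_card_filter_compl_adj G hv
      by_cases hA : (s + (t + 1)).choose s ≤ #((S.erase v).filter (G.Adj v))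
      · exact exists_isNClique_succ_of_neighbors hv (ihs _ _ _ hA)
      · have hB : (s + 1 + t).choose (s + 1) ≤ #((S.erase v).filter (Gᶜ.Adj v)) := by omega
        obtain ⟨T, hTB, hT⟩ := iht G _ hB
        obtain ⟨T', hT'S, hT'⟩ := exists_isNClique_succ_of_neighbors (G := Gᶜ) hv
          ⟨T, hTB, by rw [compl_compl]; exact hT.symm⟩
        exact ⟨T', hT'S, by rw [compl_compl] at hT'; exact hT'.symm⟩

end Ramsey

lemma contains_of_isNClique {α V : Type*} [Fintype α] {G : SimpleGraph V} (H : SimpleGraph α)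
    {k : ℕ} {T : Finset V} (hT : G.IsNClique k T) (hk : Fintype.card α ≤ k) :
    Contains G H := by
  have hG : ¬ G.CliqueFree (Fintype.card α) := fun h ↦ h.mono hk T hT
  rw [cliqueFree_iff_top_free, not_free] at hG
  exact contains_iff_isContained.mpr ((IsContained.of_le le_top).trans hG)

lemma ramseyProp_of_choose_le {α β : Type*} [Fintype α] [Fintype β] (G : SimpleGraph α)
    (H : SimpleGraph β) {N : ℕ}
    (hN : (Fintype.card α + Fintype.card β).choose (Fintype.card α) ≤ N) :
    RamseyProp N G H := by
  intro C
  classical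
  obtain ⟨T, -, hT | hT⟩ :=
    exists_isNClique_or_compl_isNClique _ _ C univ (by simpa using hN)
  · exact .inl (contains_of_isNClique G hT (Nat.le_succ _))
  · exact .inr (contains_of_isNClique H hT (Nat.le_succ _))

lemma card_lt_ramseyNumber {α β V : Type*} [Fintype α] [Fintype β] [Fintype V]
    {G : SimpleGraph α} {H : SimpleGraph β} (K : SimpleGraph V) (hG : ¬ Contains K G)
    (hH : ¬ Contains Kᶜ H) : Fintype.card V < ramseyNumber G H := by
  refine le_csInf (s := {N | RamseyProp N G H}) ⟨_, ramseyProp_of_choose_le G H le_rfl⟩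
    fun N hN ↦ ?_
  by_contra! hNV
  obtain ⟨ι⟩ :=
    Function.Embedding.nonempty_of_card_le (α := Fin N) (β := V) (by simpa using hNV)
  have hK : K.comap ι ⊴ K := (Embedding.comap ι K).isIndContained
  rw [contains_iff_isContained] at hG hH
  rcases hN (K.comap ι) with h | h <;> rw [contains_iff_isContained] at h
  · exact hG (h.trans hK.isContained)
  · exact hH (h.trans (compl_isIndContained_compl.mpr hK).isContained)

section Join

variable {α β : Type*} {G : SimpleGraph α} {H : SimpleGraph β}

lemma graphJoin_adj_inl_inr (a : α) (b : β) : (graphJoin G H).Adj (.inl a) (.inr b) := by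
  simp [graphJoin]

lemma graphJoin_adj_inr_inr {b b' : β} :
    (graphJoin G H).Adj (.inr b) (.inr b') ↔ H.Adj b b' := by
  simp only [graphJoin, fromRel_adj, ne_eq, Sum.inr.injEq]
  exact ⟨fun ⟨_, h⟩ ↦ h.elim id H.adj_symm, fun h ↦ ⟨h.ne, .inl h⟩⟩

lemma colorable_of_graphJoin [Nonempty α] {k : ℕ} (h : (graphJoin G H).Colorable (k + 1)) :
    H.Colorable k := by
  obtain ⟨c⟩ := h
  set a := c (.inl (Classical.arbitrary α))
  let c' : H.Coloring {x // x ≠ a} :=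
    Coloring.mk (fun b ↦ ⟨c (.inr b), (c.valid (graphJoin_adj_inl_inr _ b)).symm⟩)
      fun hbb' h ↦ c.valid (graphJoin_adj_inr_inr.mpr hbb') (congrArg Subtype.val h)
  simpa using c'.colorable

end Join

lemma wheel_not_colorable_three {n : ℕ} (hn : 4 ≤ n) (he : Even n) :
    ¬ (wheel n).Colorable 3 := by
  intro h
  have hrim := (colorable_of_graphJoin h).chromaticNumber_le
  rw [chromaticNumber_cycleGraph_of_odd _ (by omega) (Nat.Even.sub_odd (by omega) he odd_one)]
    at hrim
  norm_num at hrim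

lemma threeCliques_adj {n : ℕ} {x y : Fin 3 × Fin (n - 1)} :
    (threeCliques n).Adj x y ↔ x ≠ y ∧ x.1 = y.1 := by
  simp only [threeCliques, fromRel_adj, or_self_iff, eq_comm (a := y.1)]

lemma compl_threeCliques (n : ℕ) : (threeCliques n)ᶜ = completeEquipartiteGraph 3 (n - 1) := by
  ext x y
  simp only [compl_adj, threeCliques_adj, completeEquipartiteGraph_adj]
  grind

lemma not_contains_wheel_threeCliques (n : ℕ) : ¬ Contains (threeCliques n) (wheel n) := by
  rintro ⟨f, hf⟩
  have hpart : ∀ v, (f v).1 = (f (.inl 0)).1 := by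
    rintro (a | i)
    · rw [Subsingleton.elim a 0]
    · exact (threeCliques_adj.mp (f.map_adj (graphJoin_adj_inl_inr 0 i))).2.symm
  have hinj : Function.Injective fun v ↦ (f v).2 :=
    fun u v huv ↦ hf (Prod.ext ((hpart u).trans (hpart v).symm) huv)
  have := Fintype.card_le_of_injective _ hinj
  simp only [Fintype.card_sum, Fintype.card_fin] at this
  omega

lemma not_contains_wheel_compl_threeCliques {n : ℕ} (hn : 4 ≤ n) (he : Even n) :
    ¬ Contains (threeCliques n)ᶜ (wheel n) := by
  rintro ⟨f, -⟩
  rw [compl_threeCliques] at f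
  exact wheel_not_colorable_three hn he (completeEquipartiteGraph_colorable.of_hom f)

theorem stmt_8 (n : ℕ) (hn : 8 ≤ n) (he : Even n) :
    ¬ Contains (threeCliques n) (wheel n) ∧
    ¬ Contains (threeCliques n)ᶜ (wheel n) ∧
    3 * n - 2 ≤ ramseyNumber (wheel n) (wheel n) := by
  have hred := not_contains_wheel_threeCliques n
  have hblue := not_contains_wheel_compl_threeCliques (by omega) he
  refine ⟨hred, hblue, ?_⟩
  have := card_lt_ramseyNumber (threeCliques n) hred hblue
  simp only [Fintype.card_prod, Fintype.card_fin] at this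
  omega
end
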